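/- Let G be a finite simple graph on n vertices and let e = {u,v} be an edge of G. Then the adjoint polynomial satisfies the recursion h(G,x) = h(G−e, x) − h(G∩e, x), where G−e is G with the edge e deleted. -/

import Mathlib

open scoped Classical

noncomputable section

/-- The collection of (unordered) partitions of the finite set `S` into exactly `k`
nonempty parts, encoded as finsets of pairwise disjoint nonempty finsets whose union
is `S`. -/
def partitionsInto {V : Type*} [Fintype V] (S : Finset V) (k : ℕ) :
    Finset (Finset (Finset V)) :=
  Finset.univ.filter (fun P : Finset (Finset V) =>
    P.card = k ∧ (∀ T ∈ P, T.Nonempty) ∧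
      (P : Set (Finset V)).PairwiseDisjoint id ∧ P.sup id = S)

/-- `a_k(G)`: the number of partitions of the vertex set of `G` into exactly `k`
nonempty parts, each of which induces a clique of `G`. -/
def cliquePartCount {V : Type*} [Fintype V] (G : SimpleGraph V) (k : ℕ) : ℕ :=
  ((partitionsInto (Finset.univ : Finset V) k).filter
    (fun P => ∀ T : Finset V, T ∈ P → G.IsClique (↑T : Set V))).card

/-- The adjoint polynomial (with alternating signs)
`h(G,x) = ∑_{k=1}^n (-1)^{n-k} a_k(G) x^k`. -/
def adjointPoly {V : Type*} [Fintype V] (G : SimpleGraph V) (x : ℂ) : ℂ :=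
  ∑ k ∈ Finset.range (Fintype.card V + 1),
    (-1 : ℂ) ^ (Fintype.card V - k) * (cliquePartCount G k : ℂ) * x ^ k

/-- `G∩e`: delete `u,v`, add a new vertex `w` (the `none` vertex) adjacent to exactly
those vertices adjacent in `G` to both `u` and `v`. -/
def interContract {V : Type*} (G : SimpleGraph V) (u v : V) :
    SimpleGraph (Option {z : V // z ≠ u ∧ z ≠ v}) :=
  SimpleGraph.fromRel (fun a b =>
    match a, b with
    | some a, some b => G.Adj a.1 b.1
    | some a, none => G.Adj u a.1 ∧ G.Adj v a.1
    | none, some b => G.Adj u b.1 ∧ G.Adj v b.1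
    | none, none => False)

/-! Split the clique partitions of `G` according to whether `u` and `v` lie in a common part.
Those separating `u` and `v` are exactly the clique partitions of `G - e`. Those keeping them
together are unions of fibres of the map `V → V(G∩e)` collapsing `{u, v}` to the new vertex, so
taking images and preimages identifies them with the clique partitions of `G∩e` with the same
number of parts; since `G∩e` has one vertex fewer, this term enters `h` with the opposite sign. -/

open Finset Function

section Partitions

variable {V W : Type*} [Fintype V]

theorem mem_partitionsInto {S : Finset V} {k : ℕ} {P : Finset (Finset V)} :
    P ∈ partitionsInto S k ↔ P.card = k ∧ (∀ T ∈ P, T.Nonempty) ∧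
      (P : Set (Finset V)).PairwiseDisjoint id ∧ P.sup id = S := by
  simp [partitionsInto]

theorem le_card_of_mem_partitionsInto {S : Finset V} {k : ℕ} {P : Finset (Finset V)}
    (hP : P ∈ partitionsInto S k) : k ≤ S.card := by
  obtain ⟨rfl, hne, hdisj, rfl⟩ := mem_partitionsInto.1 hP
  rw [sup_eq_biUnion]
  exact card_le_card_biUnion hdisj hne

theorem exists_mem_of_mem_partitionsInto_univ {k : ℕ} {P : Finset (Finset V)}
    (hP : P ∈ partitionsInto univ k) (a : V) : ∃ T ∈ P, a ∈ T := by
  have ha : a ∈ P.sup id := (mem_partitionsInto.1 hP).2.2.2 ▸ mem_univ a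
  simpa using ha

theorem eq_of_mem_of_mem_partitionsInto {S : Finset V} {k : ℕ} {P : Finset (Finset V)}
    (hP : P ∈ partitionsInto S k) {T T' : Finset V} (hT : T ∈ P) (hT' : T' ∈ P) {a : V}
    (ha : a ∈ T) (ha' : a ∈ T') : T = T' := by
  by_contra hne
  exact disjoint_left.1 ((mem_partitionsInto.1 hP).2.2.1 hT hT' hne) ha ha'

def preimagePartition [DecidableEq V] [DecidableEq W] (f : V → W) (Q : Finset (Finset W)) :
    Finset (Finset V) :=
  Q.image fun S => univ.filter (f · ∈ S)

theorem image_filter_mem_eq [DecidableEq W] {f : V → W} (hf : Surjective f) (S : Finset W) :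
    (univ.filter (f · ∈ S)).image f = S := by
  ext x
  obtain ⟨a, rfl⟩ := hf x
  simp only [mem_image, mem_filter, mem_univ, true_and]
  exact ⟨fun ⟨b, hb, hba⟩ => hba ▸ hb, fun h => ⟨a, h, rfl⟩⟩

theorem filter_mem_image_eq [DecidableEq W] {f : V → W} {T : Finset V}
    (hT : ∀ a ∈ T, ∀ b, f a = f b → b ∈ T) :
    univ.filter (f · ∈ T.image f) = T := by
  ext b
  simp only [mem_filter, mem_univ, true_and, mem_image]
  exact ⟨fun ⟨a, ha, hab⟩ => hT a ha b hab, fun hb => ⟨b, hb, rfl⟩⟩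

theorem coe_filter_mem_eq_preimage [DecidableEq W] (f : V → W) (S : Finset W) :
    ((univ.filter (f · ∈ S) : Finset V) : Set V) = f ⁻¹' S := by
  ext; simp

theorem preimagePartition_mem_partitionsInto [Fintype W] [DecidableEq V] [DecidableEq W]
    {f : V → W} (hf : Surjective f) {k : ℕ} {Q : Finset (Finset W)}
    (hQ : Q ∈ partitionsInto univ k) :
    preimagePartition f Q ∈ partitionsInto univ k := by
  obtain ⟨hcard, hne, hdisj, -⟩ := mem_partitionsInto.1 hQ
  have hinj : Injective fun S : Finset W => univ.filter (f · ∈ S) := fun S S' h => by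
    rw [← image_filter_mem_eq hf S, ← image_filter_mem_eq hf S']
    exact congrArg (image f) h
  refine mem_partitionsInto.2 ⟨?_, ?_, ?_, ?_⟩
  · rw [preimagePartition, card_image_of_injective _ hinj, hcard]
  · simp only [preimagePartition, mem_image, forall_exists_index, and_imp,
      forall_apply_eq_imp_iff₂]
    intro S hS
    obtain ⟨x, hx⟩ := hne S hS
    obtain ⟨a, rfl⟩ := hf x
    exact ⟨a, by simpa using hx⟩
  · simp only [preimagePartition, coe_image]
    rintro _ ⟨S, hS, rfl⟩ _ ⟨S', hS', rfl⟩ hSS'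
    have hne : S ≠ S' := fun h => hSS' (h ▸ rfl)
    refine disjoint_left.2 fun a ha ha' => ?_
    simp only [id, mem_filter, mem_univ, true_and] at ha ha'
    exact disjoint_left.1 (hdisj hS hS' hne) ha ha'
  · refine eq_univ_of_forall fun a => ?_
    obtain ⟨S, hS, ha⟩ := exists_mem_of_mem_partitionsInto_univ hQ (f a)
    simp only [preimagePartition, mem_sup, mem_image, id]
    exact ⟨_, ⟨S, hS, rfl⟩, by simpa using ha⟩

theorem image_mem_partitionsInto_of_saturated [Fintype W] [DecidableEq W] {f : V → W}
    (hf : Surjective f) {k : ℕ} {P : Finset (Finset V)} (hP : P ∈ partitionsInto univ k)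
    (hsat : ∀ T ∈ P, ∀ a ∈ T, ∀ b, f a = f b → b ∈ T) :
    P.image (image f) ∈ partitionsInto univ k := by
  obtain ⟨hcard, hne, hdisj, -⟩ := mem_partitionsInto.1 hP
  refine mem_partitionsInto.2 ⟨?_, ?_, ?_, ?_⟩
  · rw [card_image_of_injOn, hcard]
    intro T hT T' hT' h
    rw [← filter_mem_image_eq (hsat T hT), ← filter_mem_image_eq (hsat T' hT')]
    exact congrArg (fun S => univ.filter (f · ∈ S)) h
  · simp only [mem_image, forall_exists_index, and_imp, forall_apply_eq_imp_iff₂]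
    exact fun T hT => (hne T hT).image f
  · simp only [coe_image]
    rintro _ ⟨T, hT, rfl⟩ _ ⟨T', hT', rfl⟩ hTT'
    refine disjoint_left.2 fun x hx hx' => hTT' ?_
    simp only [id, mem_image] at hx hx'
    obtain ⟨a, ha, rfl⟩ := hx
    obtain ⟨b, hb, hba⟩ := hx'
    rw [eq_of_mem_of_mem_partitionsInto hP hT hT' ha (hsat T' hT' b hb a hba)]
  · refine eq_univ_of_forall fun x => ?_
    obtain ⟨a, rfl⟩ := hf x
    obtain ⟨T, hT, ha⟩ := exists_mem_of_mem_partitionsInto_univ hP a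
    simp only [mem_sup, mem_image, id]
    exact ⟨_, ⟨T, hT, rfl⟩, mem_image_of_mem f ha⟩

theorem preimagePartition_image [DecidableEq V] [DecidableEq W] {f : V → W}
    {P : Finset (Finset V)}
    (hsat : ∀ T ∈ P, ∀ a ∈ T, ∀ b, f a = f b → b ∈ T) :
    preimagePartition f (P.image (image f)) = P := by
  rw [preimagePartition, image_image]
  exact (image_congr fun T hT => filter_mem_image_eq (hsat T hT)).trans image_id

theorem image_preimagePartition [DecidableEq V] [DecidableEq W] {f : V → W} (hf : Surjective f)
    (Q : Finset (Finset W)) :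
    (preimagePartition f Q).image (image f) = Q := by
  rw [preimagePartition, image_image]
  exact (image_congr fun S _ => image_filter_mem_eq hf S).trans image_id

end Partitions

namespace SimpleGraph

variable {V W : Type*}

theorem isClique_preimage_iff {G : SimpleGraph V} {H : SimpleGraph W} {f : V → W}
    (hH : ∀ x y, H.Adj x y ↔ x ≠ y ∧ ∀ a b, f a = x → f b = y → G.Adj a b)
    (hfiber : ∀ a b, f a = f b → a ≠ b → G.Adj a b) {s : Set W} :
    G.IsClique (f ⁻¹' s) ↔ H.IsClique s := by
  constructor
  · intro hG x hx y hy hxy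
    refine (hH x y).2 ⟨hxy, ?_⟩
    rintro a b rfl rfl
    exact hG hx hy fun hab => hxy (congrArg f hab)
  · intro hH' a ha b hb hab
    by_cases hf : f a = f b
    · exact hfiber a b hf hab
    · exact ((hH _ _).1 (hH' ha hb hf)).2 a b rfl rfl

theorem isClique_deleteEdges_singleton_iff {G : SimpleGraph V} {u v : V} (huv : u ≠ v)
    {s : Set V} :
    (G.deleteEdges {s(u, v)}).IsClique s ↔ G.IsClique s ∧ ¬(u ∈ s ∧ v ∈ s) := by
  simp only [isClique_iff, Set.Pairwise, deleteEdges_adj,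
    Set.mem_singleton_iff, Sym2.eq_iff]
  constructor
  · intro h
    exact ⟨fun a ha b hb hab => (h ha hb hab).1,
      fun ⟨hu, hv⟩ => (h hu hv huv).2 (Or.inl ⟨rfl, rfl⟩)⟩
  · rintro ⟨h, hsep⟩ a ha b hb hab
    refine ⟨h ha hb hab, ?_⟩
    rintro (⟨rfl, rfl⟩ | ⟨rfl, rfl⟩)
    exacts [hsep ⟨ha, hb⟩, hsep ⟨hb, ha⟩]

end SimpleGraph

section InterContract

variable {V : Type*}

def contractPair (u v z : V) : Option {z : V // z ≠ u ∧ z ≠ v} :=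
  if h : z ≠ u ∧ z ≠ v then some ⟨z, h⟩ else none

variable {u v : V}

theorem contractPair_eq_none_iff {a : V} : contractPair u v a = none ↔ a = u ∨ a = v := by
  unfold contractPair
  split_ifs with h <;> simp only [false_iff, true_iff, not_or] <;> tauto

theorem contractPair_eq_some_iff {a : V} {z : {z : V // z ≠ u ∧ z ≠ v}} :
    contractPair u v a = some z ↔ a = z.1 := by
  unfold contractPair
  split_ifs with h
  · simp [Subtype.ext_iff]
  · simp only [false_iff]
    rintro rfl
    exact h z.2

theorem contractPair_surjective : Function.Surjective (contractPair u v) := by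
  rintro (_ | z)
  · exact ⟨u, contractPair_eq_none_iff.2 (Or.inl rfl)⟩
  · exact ⟨z.1, contractPair_eq_some_iff.2 rfl⟩

theorem contractPair_eq_contractPair_iff {a b : V} :
    contractPair u v a = contractPair u v b ↔
      a = b ∨ (a = u ∨ a = v) ∧ (b = u ∨ b = v) := by
  cases hb : contractPair u v b with
  | none => rw [contractPair_eq_none_iff] at hb ⊢; aesop
  | some z => rw [contractPair_eq_some_iff] at hb ⊢; have := z.2; aesop

theorem interContract_adj_iff {G : SimpleGraph V} {x y : Option {z : V // z ≠ u ∧ z ≠ v}} :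
    (interContract G u v).Adj x y ↔
      x ≠ y ∧ ∀ a b, contractPair u v a = x → contractPair u v b = y → G.Adj a b := by
  cases x <;> cases y <;>
    simp [interContract, contractPair_eq_none_iff, contractPair_eq_some_iff, or_imp, forall_and,
      G.adj_comm]

variable {G : SimpleGraph V}

theorem isClique_preimage_contractPair_iff (he : G.Adj u v)
    {s : Set (Option {z : V // z ≠ u ∧ z ≠ v})} :
    G.IsClique (contractPair u v ⁻¹' s) ↔ (interContract G u v).IsClique s := by
  refine SimpleGraph.isClique_preimage_iff (fun _ _ => interContract_adj_iff)
    fun a b hab hne => ?_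
  rcases contractPair_eq_contractPair_iff.1 hab with rfl | ⟨rfl | rfl, rfl | rfl⟩
  all_goals first | exact absurd rfl hne | exact he | exact he.symm

end InterContract

section Counting

variable {V : Type*} [Fintype V]

def cliquePartitions (G : SimpleGraph V) (k : ℕ) : Finset (Finset (Finset V)) :=
  (partitionsInto univ k).filter fun P => ∀ T ∈ P, G.IsClique (T : Set V)

theorem mem_cliquePartitions {G : SimpleGraph V} {k : ℕ} {P : Finset (Finset V)} :
    P ∈ cliquePartitions G k ↔
      P ∈ partitionsInto univ k ∧ ∀ T ∈ P, G.IsClique (T : Set V) :=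
  mem_filter

theorem cliquePartCount_eq_card_cliquePartitions (G : SimpleGraph V) (k : ℕ) :
    cliquePartCount G k = (cliquePartitions G k).card := rfl

theorem cliquePartCount_eq_zero_of_card_lt (G : SimpleGraph V) {k : ℕ}
    (hk : Fintype.card V < k) : cliquePartCount G k = 0 := by
  rw [cliquePartCount_eq_card_cliquePartitions, card_eq_zero, eq_empty_iff_forall_notMem]
  intro P hP
  have := le_card_of_mem_partitionsInto (mem_cliquePartitions.1 hP).1
  rw [card_univ] at this
  omega

variable {G : SimpleGraph V} {u v : V}

theorem filter_separated_cliquePartitions (huv : u ≠ v) (k : ℕ) :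
    (cliquePartitions G k).filter (fun P => ¬∃ T ∈ P, u ∈ T ∧ v ∈ T)
      = cliquePartitions (G.deleteEdges {s(u, v)}) k := by
  ext P
  simp only [mem_filter, mem_cliquePartitions, SimpleGraph.isClique_deleteEdges_singleton_iff huv,
    mem_coe, forall_and, not_exists, not_and]
  tauto

theorem mem_of_contractPair_eq {k : ℕ} {P : Finset (Finset V)} (hP : P ∈ partitionsInto univ k)
    {T₀ : Finset V} (hT₀ : T₀ ∈ P) (hu : u ∈ T₀) (hv : v ∈ T₀)
    {T : Finset V} (hT : T ∈ P) {a b : V} (ha : a ∈ T)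
    (hab : contractPair u v a = contractPair u v b) : b ∈ T := by
  rcases contractPair_eq_contractPair_iff.1 hab with rfl | ⟨hau, hbu⟩
  · exact ha
  · obtain rfl : T = T₀ :=
      eq_of_mem_of_mem_partitionsInto hP hT hT₀ ha (by rcases hau with rfl | rfl <;> assumption)
    rcases hbu with rfl | rfl <;> assumption

theorem image_mem_cliquePartitions_interContract (he : G.Adj u v) {k : ℕ}
    {P : Finset (Finset V)} (hP : P ∈ cliquePartitions G k)
    (hsat : ∀ T ∈ P, ∀ a ∈ T, ∀ b, contractPair u v a = contractPair u v b → b ∈ T) :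
    P.image (image (contractPair u v)) ∈ cliquePartitions (interContract G u v) k := by
  obtain ⟨hPpart, hPclique⟩ := mem_cliquePartitions.1 hP
  refine mem_cliquePartitions.2
    ⟨image_mem_partitionsInto_of_saturated contractPair_surjective hPpart hsat, ?_⟩
  simp only [mem_image, forall_exists_index, and_imp, forall_apply_eq_imp_iff₂]
  intro T hT
  rw [← isClique_preimage_contractPair_iff he, ← coe_filter_mem_eq_preimage,
    filter_mem_image_eq (hsat T hT)]
  exact hPclique T hT

theorem preimagePartition_mem_cliquePartitions (he : G.Adj u v) {k : ℕ}
    {Q : Finset (Finset (Option {z : V // z ≠ u ∧ z ≠ v}))}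
    (hQ : Q ∈ cliquePartitions (interContract G u v) k) :
    preimagePartition (contractPair u v) Q ∈ cliquePartitions G k := by
  obtain ⟨hQpart, hQclique⟩ := mem_cliquePartitions.1 hQ
  refine mem_cliquePartitions.2
    ⟨preimagePartition_mem_partitionsInto contractPair_surjective hQpart, ?_⟩
  simp only [preimagePartition, mem_image, forall_exists_index, and_imp,
    forall_apply_eq_imp_iff₂]
  intro S hS
  rw [coe_filter_mem_eq_preimage, isClique_preimage_contractPair_iff he]
  exact hQclique S hS

theorem exists_mem_preimagePartition_contractPair {k : ℕ}
    {Q : Finset (Finset (Option {z : V // z ≠ u ∧ z ≠ v}))} (hQ : Q ∈ partitionsInto univ k) :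
    ∃ T ∈ preimagePartition (contractPair u v) Q, u ∈ T ∧ v ∈ T := by
  obtain ⟨S, hS, hnone⟩ := exists_mem_of_mem_partitionsInto_univ hQ none
  refine ⟨_, mem_image_of_mem _ hS, ?_⟩
  simp only [mem_filter, mem_univ, true_and]
  rw [contractPair_eq_none_iff.2 (Or.inl rfl), contractPair_eq_none_iff.2 (Or.inr rfl)]
  exact ⟨hnone, hnone⟩

theorem card_filter_together_cliquePartitions (he : G.Adj u v) (k : ℕ) :
    ((cliquePartitions G k).filter fun P => ∃ T ∈ P, u ∈ T ∧ v ∈ T).card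
      = (cliquePartitions (interContract G u v) k).card := by
  have hsat : ∀ P ∈ (cliquePartitions G k).filter (fun P => ∃ T ∈ P, u ∈ T ∧ v ∈ T),
      ∀ T ∈ P, ∀ a ∈ T, ∀ b, contractPair u v a = contractPair u v b → b ∈ T := by
    intro P hP T hT a ha b hab
    obtain ⟨hPG, T₀, hT₀, hu, hv⟩ := mem_filter.1 hP
    exact mem_of_contractPair_eq (mem_cliquePartitions.1 hPG).1 hT₀ hu hv hT ha hab
  refine card_nbij' (fun P => P.image (image (contractPair u v)))
    (preimagePartition (contractPair u v))
    (fun P hP => image_mem_cliquePartitions_interContract he (mem_filter.1 hP).1 (hsat P hP))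
    (fun Q hQ => mem_filter.2 ⟨preimagePartition_mem_cliquePartitions he hQ,
      exists_mem_preimagePartition_contractPair (mem_cliquePartitions.1 hQ).1⟩)
    (fun P hP => preimagePartition_image (hsat P hP))
    (fun Q _ => image_preimagePartition contractPair_surjective Q)

theorem cliquePartCount_eq_add (he : G.Adj u v) (k : ℕ) :
    cliquePartCount G k = cliquePartCount (G.deleteEdges {s(u, v)}) k
      + cliquePartCount (interContract G u v) k := by
  simp only [cliquePartCount_eq_card_cliquePartitions]
  rw [← card_filter_add_card_filter_not (fun P => ∃ T ∈ P, u ∈ T ∧ v ∈ T),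
    filter_separated_cliquePartitions he.ne, card_filter_together_cliquePartitions he, add_comm]

end Counting

theorem sum_range_card_add_one_add_one_eq_neg_adjointPoly {W : Type*} [Fintype W]
    (H : SimpleGraph W) (x : ℂ) :
    ∑ k ∈ range (Fintype.card W + 1 + 1),
        (-1 : ℂ) ^ (Fintype.card W + 1 - k) * (cliquePartCount H k : ℂ) * x ^ k
      = -adjointPoly H x := by
  rw [sum_range_succ, cliquePartCount_eq_zero_of_card_lt H (Nat.lt_succ_self _), adjointPoly,
    ← sum_neg_distrib]
  simp only [Nat.cast_zero, mul_zero, zero_mul, add_zero]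
  refine sum_congr rfl fun k hk => ?_
  rw [Nat.sub_add_comm (Nat.lt_succ_iff.1 (mem_range.1 hk)), pow_succ]
  ring

theorem card_option_ne_and_ne_add_one {V : Type*} [Fintype V] {u v : V} (huv : u ≠ v) :
    Fintype.card (Option {z : V // z ≠ u ∧ z ≠ v}) + 1 = Fintype.card V := by
  have hfilter : univ.filter (fun z : V => z ≠ u ∧ z ≠ v) = (univ.erase u).erase v := by
    ext; simp [and_comm]
  rw [Fintype.card_option, Fintype.card_subtype, hfilter,
    card_erase_add_one (mem_erase.2 ⟨huv.symm, mem_univ v⟩), card_erase_add_one (mem_univ u),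
    card_univ]

/-- the adjoint polynomial satisfies the recursion
`h(G,x) = h(G-e,x) - h(G∩e,x)` for any edge `e = {u,v}`. -/
theorem adjointPoly_recursion {V : Type*} [Fintype V] (G : SimpleGraph V) (u v : V)
    (he : G.Adj u v) (x : ℂ) :
    adjointPoly G x = adjointPoly (G.deleteEdges {s(u, v)}) x
      - adjointPoly (interContract G u v) x := by
  rw [sub_eq_add_neg, ← sum_range_card_add_one_add_one_eq_neg_adjointPoly,
    card_option_ne_and_ne_add_one he.ne, adjointPoly, adjointPoly, ← sum_add_distrib]
  refine sum_congr rfl fun k _ => ?_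
  rw [cliquePartCount_eq_add he k]
  push_cast
  ring
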